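/- arXiv:1703.08667 — 3 statements merged into one kernel-verified Lean document; each statement's English description precedes it below -/
import Mathlib

section
/- Bernstein's inequality for sums of independent sub-exponential random variables: let X_1, ..., X_n be independent real random variables such that each X_i has finite mean mu_i and is sub-exponential with parameters (sigma_i, b_i). Set sigma = sqrt((1/n) * sum_{i=1}^n sigma_i^2) and b = max_{1<=i<=n} b_i. Then for every t >= 0, the probability P(sum_{i=1}^n X_i - sum_{i=1}^n mu_i >= t) is at most exp(-t^2/(2*n*sigma^2)) when 0 <= t <= n*sigma^2/b, and at most exp(-t/(2b)) when t > n*sigma^2/b; moreover the same two bounds hold for the lower tail P(sum_{i=1}^n mu_i - sum_{i=1}^n X_i >= t). -/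
open MeasureTheory ProbabilityTheory Real

/-! Independence multiplies the moment generating function bounds of the summands, so the centred
sum is again sub-exponential, with parameters `(√(∑ σᵢ²), max bᵢ)`. For a sub-exponential variable,
Chernoff's bound `exp (-λ t + σ² λ² / 2)` holds for `0 ≤ λ < 1 / b` and, by continuity in `λ`, also
at `λ = 1 / b`. Taking `λ = t / σ²` gives the sub-Gaussian regime `t ≤ σ² / b`, and `λ = 1 / b` the
exponential one. The lower tail is the upper tail of `-X`. -/

namespace ProbabilityTheory

variable {Ω ι : Type*} [MeasurableSpace Ω] {μ : Measure Ω}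

def HasSubexponentialMGF (X : Ω → ℝ) (m σ b : ℝ) (μ : Measure Ω) : Prop :=
  ∀ lam : ℝ, |lam| < 1 / b →
    Integrable (fun ω => exp (lam * (X ω - m))) μ ∧
      ∫ ω, exp (lam * (X ω - m)) ∂μ ≤ exp (σ ^ 2 * lam ^ 2 / 2)

namespace HasSubexponentialMGF

variable {X : Ω → ℝ} {m σ b : ℝ}

lemma mono_right {b' : ℝ} (h : HasSubexponentialMGF X m σ b μ) (hb : 0 < b) (hbb' : b ≤ b') :
    HasSubexponentialMGF X m σ b' μ :=
  fun lam hlam => h lam (hlam.trans_le (one_div_le_one_div_of_le hb hbb'))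

lemma neg (h : HasSubexponentialMGF X m σ b μ) :
    HasSubexponentialMGF (fun ω => -X ω) (-m) σ b μ := by
  intro lam hlam
  have hexp : (fun ω => exp (lam * (-X ω - -m))) = fun ω => exp (-lam * (X ω - m)) := by
    funext ω; ring_nf
  rw [hexp, ← neg_sq lam]
  exact h (-lam) (by rwa [abs_neg])

lemma measure_ge_le_exp_of_lt [IsFiniteMeasure μ] (h : HasSubexponentialMGF X m σ b μ)
    (t : ℝ) {lam : ℝ} (hlam : 0 ≤ lam) (hlamb : lam < 1 / b) :
    μ {ω | t ≤ X ω - m} ≤ ENNReal.ofReal (exp (-(lam * t) + σ ^ 2 * lam ^ 2 / 2)) := by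
  obtain ⟨hint, hmgf⟩ := h lam (by rwa [abs_of_nonneg hlam])
  rw [← ofReal_measureReal]
  refine ENNReal.ofReal_le_ofReal ?_
  calc μ.real {ω | t ≤ X ω - m}
      ≤ exp (-lam * t) * mgf (fun ω => X ω - m) μ lam := measure_ge_le_exp_mul_mgf t hlam hint
    _ ≤ exp (-lam * t) * exp (σ ^ 2 * lam ^ 2 / 2) := by gcongr; exact hmgf
    _ = exp (-(lam * t) + σ ^ 2 * lam ^ 2 / 2) := by rw [← exp_add, neg_mul]

lemma measure_ge_le_exp [IsFiniteMeasure μ] (h : HasSubexponentialMGF X m σ b μ)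
    (hb : 0 < b) (t : ℝ) {lam : ℝ} (hlam : 0 ≤ lam) (hlamb : lam ≤ 1 / b) :
    μ {ω | t ≤ X ω - m} ≤ ENNReal.ofReal (exp (-(lam * t) + σ ^ 2 * lam ^ 2 / 2)) := by
  have hclosed : IsClosed
      {lam : ℝ | μ {ω | t ≤ X ω - m} ≤ ENNReal.ofReal (exp (-(lam * t) + σ ^ 2 * lam ^ 2 / 2))} :=
    isClosed_le continuous_const (ENNReal.continuous_ofReal.comp (by fun_prop))
  have hsub : closure (Set.Ico 0 (1 / b)) ⊆ _ :=
    closure_minimal (fun lam hlam => h.measure_ge_le_exp_of_lt t hlam.1 hlam.2) hclosed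
  rw [closure_Ico (one_div_pos.mpr hb).ne] at hsub
  exact hsub ⟨hlam, hlamb⟩

lemma measure_ge_le_exp_neg_sq_div [IsProbabilityMeasure μ] (h : HasSubexponentialMGF X m σ b μ)
    (hb : 0 < b) {t : ℝ} (ht : 0 ≤ t) (htb : t ≤ σ ^ 2 / b) :
    μ {ω | t ≤ X ω - m} ≤ ENNReal.ofReal (exp (-(t ^ 2) / (2 * σ ^ 2))) := by
  rcases (sq_nonneg σ).eq_or_lt with hσ | hσ
  · obtain rfl : t = 0 := by rw [← hσ, zero_div] at htb; linarith
    simpa using prob_le_one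
  · have hlamb : t / σ ^ 2 ≤ 1 / b := by
      rw [div_le_div_iff₀ hσ hb]; rw [le_div_iff₀ hb] at htb; linarith
    convert h.measure_ge_le_exp hb t (by positivity) hlamb using 4
    field_simp
    ring

lemma measure_ge_le_exp_neg_div [IsFiniteMeasure μ] (h : HasSubexponentialMGF X m σ b μ)
    (hb : 0 < b) {t : ℝ} (htb : σ ^ 2 / b < t) :
    μ {ω | t ≤ X ω - m} ≤ ENNReal.ofReal (exp (-t / (2 * b))) := by
  refine (h.measure_ge_le_exp hb t (by positivity) le_rfl).trans ?_
  gcongr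
  rw [div_lt_iff₀ hb] at htb
  field_simp
  linarith

lemma measure_le_le_exp_neg_sq_div [IsProbabilityMeasure μ] (h : HasSubexponentialMGF X m σ b μ)
    (hb : 0 < b) {t : ℝ} (ht : 0 ≤ t) (htb : t ≤ σ ^ 2 / b) :
    μ {ω | t ≤ m - X ω} ≤ ENNReal.ofReal (exp (-(t ^ 2) / (2 * σ ^ 2))) := by
  simpa only [neg_sub_neg] using h.neg.measure_ge_le_exp_neg_sq_div hb ht htb

lemma measure_le_le_exp_neg_div [IsFiniteMeasure μ] (h : HasSubexponentialMGF X m σ b μ)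
    (hb : 0 < b) {t : ℝ} (htb : σ ^ 2 / b < t) :
    μ {ω | t ≤ m - X ω} ≤ ENNReal.ofReal (exp (-t / (2 * b))) := by
  simpa only [neg_sub_neg] using h.neg.measure_ge_le_exp_neg_div hb htb

end HasSubexponentialMGF

lemma iIndepFun.hasSubexponentialMGF_sum [Fintype ι] {X : ι → Ω → ℝ} {m σ : ι → ℝ} {b : ℝ}
    (hindep : iIndepFun X μ) (hmeas : ∀ i, Measurable (X i))
    (h : ∀ i, HasSubexponentialMGF (X i) (m i) (σ i) b μ) :
    HasSubexponentialMGF (fun ω => ∑ i, X i ω) (∑ i, m i) √(∑ i, σ i ^ 2) b μ := by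
  have := hindep.isProbabilityMeasure
  set Y : ι → Ω → ℝ := fun i ω => X i ω - m i
  have hYindep : iIndepFun Y μ :=
    hindep.comp (fun i x => x - m i) fun _ => measurable_id.sub_const _
  have hYmeas : ∀ i, Measurable (Y i) := fun i => (hmeas i).sub_const _
  have hY : ∀ ω, ∑ i, X i ω - ∑ i, m i = (∑ i, Y i) ω := by
    simp [Y, Finset.sum_apply, Finset.sum_sub_distrib]
  intro lam hlam
  simp only [hY]
  refine ⟨hYindep.integrable_exp_mul_sum hYmeas fun i _ => (h i lam hlam).1, ?_⟩
  calc mgf (∑ i, Y i) μ lam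
      = ∏ i, mgf (Y i) μ lam := hYindep.mgf_sum hYmeas _
    _ ≤ ∏ i, exp (σ i ^ 2 * lam ^ 2 / 2) :=
      Finset.prod_le_prod (fun _ _ => mgf_nonneg) fun i _ => (h i lam hlam).2
    _ = exp (√(∑ i, σ i ^ 2) ^ 2 * lam ^ 2 / 2) := by
      rw [← exp_sum, sq_sqrt (by positivity), Finset.sum_mul, Finset.sum_div]

end ProbabilityTheory

theorem bernstein_inequality_subexponential_general
    {Ω : Type*} [MeasurableSpace Ω] (μ : Measure Ω) [IsProbabilityMeasure μ]
    (n : ℕ) (hn : 0 < n)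
    (X : Fin n → Ω → ℝ) (μᵢ σv b : Fin n → ℝ)
    (hb : ∀ i, 0 < b i)
    (hindep : iIndepFun X μ)
    (hmeas : ∀ i, Measurable (X i))
    (hsubexp : ∀ i, ∀ lam : ℝ, |lam| < 1 / b i →
      Integrable (fun ω => exp (lam * (X i ω - μᵢ i))) μ ∧
        ∫ ω, exp (lam * (X i ω - μᵢ i)) ∂μ ≤ exp (σv i ^ 2 * lam ^ 2 / 2)) :
    ∀ t : ℝ, 0 ≤ t →
      letI σ : ℝ := Real.sqrt ((1 / (n : ℝ)) * ∑ i, σv i ^ 2)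
      letI bmax : ℝ := Finset.univ.sup' (Finset.univ_nonempty_iff.mpr (Fin.pos_iff_nonempty.mp hn)) b
      ((t ≤ (n : ℝ) * σ ^ 2 / bmax →
          μ {ω | t ≤ (∑ i, X i ω) - ∑ i, μᵢ i}
            ≤ ENNReal.ofReal (exp (-(t ^ 2) / (2 * (n : ℝ) * σ ^ 2)))) ∧
        ((n : ℝ) * σ ^ 2 / bmax < t →
          μ {ω | t ≤ (∑ i, X i ω) - ∑ i, μᵢ i}
            ≤ ENNReal.ofReal (exp (-t / (2 * bmax))))) ∧
      ((t ≤ (n : ℝ) * σ ^ 2 / bmax →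
          μ {ω | t ≤ (∑ i, μᵢ i) - ∑ i, X i ω}
            ≤ ENNReal.ofReal (exp (-(t ^ 2) / (2 * (n : ℝ) * σ ^ 2)))) ∧
        ((n : ℝ) * σ ^ 2 / bmax < t →
          μ {ω | t ≤ (∑ i, μᵢ i) - ∑ i, X i ω}
            ≤ ENNReal.ofReal (exp (-t / (2 * bmax))))) := by
  intro t ht
  set bmax := Finset.univ.sup' (Finset.univ_nonempty_iff.mpr (Fin.pos_iff_nonempty.mp hn)) b
  have hbmax : 0 < bmax := (hb ⟨0, hn⟩).trans_le (Finset.le_sup' b (Finset.mem_univ _))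
  have hsum : HasSubexponentialMGF (fun ω => ∑ i, X i ω) (∑ i, μᵢ i) √(∑ i, σv i ^ 2) bmax μ :=
    hindep.hasSubexponentialMGF_sum hmeas fun i =>
      HasSubexponentialMGF.mono_right (hsubexp i) (hb i) (Finset.le_sup' b (Finset.mem_univ i))
  have hvar : (n : ℝ) * √((1 / (n : ℝ)) * ∑ i, σv i ^ 2) ^ 2 = √(∑ i, σv i ^ 2) ^ 2 := by
    have hn' : (n : ℝ) ≠ 0 := by positivity
    rw [sq_sqrt (by positivity), sq_sqrt (by positivity)]
    field_simp
  simp only [mul_assoc (2 : ℝ), hvar]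
  exact ⟨⟨hsum.measure_ge_le_exp_neg_sq_div hbmax ht, hsum.measure_ge_le_exp_neg_div hbmax⟩,
    ⟨hsum.measure_le_le_exp_neg_sq_div hbmax ht, hsum.measure_le_le_exp_neg_div hbmax⟩⟩

/-- Bernstein's inequality for sums of independent sub-exponential random variables.
Each `X i` has mean `μᵢ i` and is sub-exponential with parameters `(σ i, b i)`, i.e.
`E[exp(λ(X i - μᵢ i))] ≤ exp(σ i ^ 2 * λ ^ 2 / 2)` for `|λ| < 1/(b i)`.  With
`σ = √((1/n) ∑ σ i ^ 2)` and `bmax = max_i b i`, for every `t ≥ 0` the upper tail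
`P(∑ X i - ∑ μᵢ i ≥ t)` is bounded by `exp(-t²/(2 n σ²))` when `t ≤ n σ² / bmax`
and by `exp(-t/(2 bmax))` when `t > n σ² / bmax`, and the same bounds hold for the
lower tail `P(∑ μᵢ i - ∑ X i ≥ t)`. -/
theorem bernstein_inequality_subexponential
    {Ω : Type*} [MeasurableSpace Ω] (μ : Measure Ω) [IsProbabilityMeasure μ]
    (n : ℕ) (hn : 0 < n)
    (X : Fin n → Ω → ℝ) (μᵢ σv b : Fin n → ℝ)
    (hσ : ∀ i, 0 ≤ σv i) (hb : ∀ i, 0 < b i)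
    (hindep : iIndepFun X μ)
    (hmeas : ∀ i, Measurable (X i))
    (hint : ∀ i, Integrable (X i) μ)
    (hmean : ∀ i, μᵢ i = ∫ ω, X i ω ∂μ)
    (hsubexp : ∀ i, ∀ lam : ℝ, |lam| < 1 / b i →
      Integrable (fun ω => exp (lam * (X i ω - μᵢ i))) μ ∧
        ∫ ω, exp (lam * (X i ω - μᵢ i)) ∂μ ≤ exp (σv i ^ 2 * lam ^ 2 / 2)) :
    ∀ t : ℝ, 0 ≤ t →
      letI σ : ℝ := Real.sqrt ((1 / (n : ℝ)) * ∑ i, σv i ^ 2)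
      letI bmax : ℝ := Finset.univ.sup' (Finset.univ_nonempty_iff.mpr (Fin.pos_iff_nonempty.mp hn)) b
      ((t ≤ (n : ℝ) * σ ^ 2 / bmax →
          μ {ω | t ≤ (∑ i, X i ω) - ∑ i, μᵢ i}
            ≤ ENNReal.ofReal (exp (-(t ^ 2) / (2 * (n : ℝ) * σ ^ 2)))) ∧
        ((n : ℝ) * σ ^ 2 / bmax < t →
          μ {ω | t ≤ (∑ i, X i ω) - ∑ i, μᵢ i}
            ≤ ENNReal.ofReal (exp (-t / (2 * bmax))))) ∧
      ((t ≤ (n : ℝ) * σ ^ 2 / bmax →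
          μ {ω | t ≤ (∑ i, μᵢ i) - ∑ i, X i ω}
            ≤ ENNReal.ofReal (exp (-(t ^ 2) / (2 * (n : ℝ) * σ ^ 2)))) ∧
        ((n : ℝ) * σ ^ 2 / bmax < t →
          μ {ω | t ≤ (∑ i, μᵢ i) - ∑ i, X i ω}
            ≤ ENNReal.ofReal (exp (-t / (2 * bmax))))) :=
  bernstein_inequality_subexponential_general μ n hn X μᵢ σv b hb hindep hmeas hsubexp
end

section
/- Square-root summation lemma: let (z_k)_{k>=1} be a sequence of nonnegative reals and define Z_0 = 1 and Z_k = max{1, sum_{i=1}^k z_i} for k >= 1. If 0 <= z_k <= Z_{k-1} for every k, then for every n >= 1 it holds that sum_{k=1}^n z_k / sqrt(Z_{k-1}) <= (sqrt(2) + 1) * sqrt(Z_n). -/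
/-- Square-root summation lemma: let `(z k)_{k ≥ 1}` be nonnegative reals and
`Z k = max {1, ∑_{i=1}^k z i}` (so `Z 0 = 1`).  If `0 ≤ z k ≤ Z (k-1)` for every
`k ≥ 1`, then for every `n ≥ 1`,
`∑_{k=1}^n z k / √(Z (k-1)) ≤ (√2 + 1) * √(Z n)`. -/
theorem sqrt_summation_lemma
    (z Z : ℕ → ℝ)
    (hZ : ∀ k : ℕ, Z k = max 1 (∑ i ∈ Finset.Icc 1 k, z i))
    (hz : ∀ k : ℕ, 1 ≤ k → 0 ≤ z k ∧ z k ≤ Z (k - 1)) :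
    ∀ n : ℕ, 1 ≤ n →
      ∑ k ∈ Finset.Icc 1 n, z k / Real.sqrt (Z (k - 1))
        ≤ (Real.sqrt 2 + 1) * Real.sqrt (Z n) := by
  intro n hn
  set S : ℕ → ℝ := fun k => ∑ i ∈ Finset.Icc 1 k, z i with hS
  set f : ℕ → ℝ := fun k => (Real.sqrt 2 + 1) * Real.sqrt (Z k) + min (S k) 2 with hf
  have hs2 : (1:ℝ) ≤ Real.sqrt 2 := by
    rw [show (1:ℝ) = Real.sqrt 1 by simp]
    exact Real.sqrt_le_sqrt (by norm_num)
  have hSnonneg : ∀ k, 0 ≤ S k :=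
    fun k => Finset.sum_nonneg fun i hi => (hz i (Finset.mem_Icc.mp hi).1).1
  have hSsucc : ∀ k, S (k+1) = S k + z (k+1) := by
    intro k
    simp only [hS]
    rw [Finset.sum_Icc_succ_top (by omega)]
  have hZ1 : ∀ k, 1 ≤ Z k := fun k => (hZ k).ge.trans' (le_max_left _ _)
  have hZpos : ∀ k, 0 < Z k := fun k => lt_of_lt_of_le one_pos (hZ1 k)
  have hsqrtZ1 : ∀ k, 1 ≤ Real.sqrt (Z k) := by
    intro k
    rw [show (1:ℝ) = Real.sqrt 1 by simp]
    exact Real.sqrt_le_sqrt (hZ1 k)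
  have hstep : ∀ k : ℕ, z (k+1) / Real.sqrt (Z k) ≤ f (k+1) - f k := by
    intro k
    obtain ⟨hz0, hzle⟩ := hz (k+1) (by omega)
    simp only [Nat.add_sub_cancel] at hzle
    have hZk : Z k = max 1 (S k) := hZ k
    have hZk1 : Z (k+1) = max 1 (S k + z (k+1)) := by rw [hZ, ← hSsucc]
    by_cases hcase : S k < 1
    · -- Z k = 1, term is z (k+1), absorbed by the min part
      have hZkeq : Z k = 1 := by rw [hZk]; exact max_eq_left hcase.le
      have hz1 : z (k+1) ≤ 1 := by rwa [hZkeq] at hzle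
      have hSk1 : S (k+1) < 2 := by rw [hSsucc]; linarith
      have hmin1 : min (S (k+1)) 2 = S (k+1) := min_eq_left hSk1.le
      have hmin0 : min (S k) 2 = S k := min_eq_left (by linarith)
      have hmin1' : min (S k + z (k+1)) 2 = S k + z (k+1) := by
        rw [← hSsucc]; exact hmin1
      have h1 : (1:ℝ) ≤ Real.sqrt (Z (k+1)) := hsqrtZ1 (k+1)
      simp only [hf, hmin0, hSsucc, hmin1', hZkeq, Real.sqrt_one]
      have : z (k+1) / 1 = z (k+1) := by ring
      rw [this]
      nlinarith
    · push_neg at hcase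
      have hZkeq : Z k = S k := by rw [hZk]; exact max_eq_right hcase
      have hZk1eq : Z (k+1) = S k + z (k+1) := by
        rw [hZk1]; exact max_eq_right (by linarith)
      have hmin : min (S k) 2 ≤ min (S (k+1)) 2 := by
        apply min_le_min _ le_rfl
        rw [hSsucc]; linarith
      -- main inequality: z/√a ≤ (√2+1)(√(a+z) − √a) with 1 ≤ a, 0 ≤ z ≤ a
      set a := S k with ha
      set w := z (k+1) with hw
      have hwa : w ≤ a := by rwa [hZkeq] at hzle
      have ha0 : (0:ℝ) < a := by linarith
      have hsa : 0 < Real.sqrt a := Real.sqrt_pos.mpr ha0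
      have hsqa : Real.sqrt a * Real.sqrt a = a := Real.mul_self_sqrt ha0.le
      have hsqaw : Real.sqrt (a+w) * Real.sqrt (a+w) = a + w :=
        Real.mul_self_sqrt (by linarith)
      have hmono : Real.sqrt a ≤ Real.sqrt (a+w) := Real.sqrt_le_sqrt (by linarith)
      have hupper : Real.sqrt (a+w) ≤ Real.sqrt 2 * Real.sqrt a := by
        rw [← Real.sqrt_mul (by norm_num)]
        exact Real.sqrt_le_sqrt (by linarith)
      have hkey : w ≤ (Real.sqrt 2 + 1) * Real.sqrt a *
          (Real.sqrt (a+w) - Real.sqrt a) := by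
        nlinarith [mul_le_mul_of_nonneg_right
          (add_le_add_right hupper (Real.sqrt a)) (sub_nonneg.mpr hmono)]
      have hmain : w / Real.sqrt a ≤ (Real.sqrt 2 + 1) *
          (Real.sqrt (a+w) - Real.sqrt a) := by
        rw [div_le_iff₀ hsa]
        nlinarith [hkey]
      simp only [hf, hZkeq, hZk1eq]
      have : Real.sqrt a * Real.sqrt a = a := hsqa
      calc w / Real.sqrt a ≤ (Real.sqrt 2 + 1) * (Real.sqrt (a+w) - Real.sqrt a) := hmain
        _ ≤ (Real.sqrt 2 + 1) * Real.sqrt (a+w) + min (S (k+1)) 2 -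
            ((Real.sqrt 2 + 1) * Real.sqrt a + min (S k) 2) := by
              nlinarith [hmin]
  have hsum : ∑ k ∈ Finset.Icc 1 n, z k / Real.sqrt (Z (k - 1))
      = ∑ i ∈ Finset.range n, z (i+1) / Real.sqrt (Z i) := by
    rw [← Finset.Ico_add_one_right_eq_Icc, Finset.sum_Ico_eq_sum_range]
    exact Finset.sum_congr (by norm_num) fun i _ => by
      rw [add_comm 1 i, Nat.add_sub_cancel]
  rw [hsum]
  have h1 : ∑ i ∈ Finset.range n, z (i+1) / Real.sqrt (Z i)
      ≤ ∑ i ∈ Finset.range n, (f (i+1) - f i) :=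
    Finset.sum_le_sum fun i _ => hstep i
  rw [Finset.sum_range_sub f n] at h1
  have hf0 : f 0 = Real.sqrt 2 + 1 := by
    have : S 0 = 0 := by simp [hS]
    simp [hf, this, hZ 0, hS]
  have hfn : f n ≤ (Real.sqrt 2 + 1) * Real.sqrt (Z n) + (Real.sqrt 2 + 1) := by
    simp only [hf]
    have : min (S n) 2 ≤ 2 := min_le_right _ _
    linarith
  have h2 : f n - f 0 ≤ (Real.sqrt 2 + 1) * Real.sqrt (Z n) := by
    rw [hf0]; linarith
  exact h1.trans h2
end

section
/- Unique solution of the inner-loop hitting-time system: let m >= 2 be an integer and suppose tau_1, ..., tau_{m-1} are real numbers satisfying, for every i in {1, ..., m-1}, the equation tau_i = (m+1)/2 + (1/m) * sum_{j=1}^{i-1} tau_j + (1/m) * sum_{j=1}^{m-i} tau_j (where empty sums are zero). Then tau_i = m*(m+1)/2 for every i in {1, ..., m-1}; in particular, the linear system has this as its unique solution. -/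
/-- Unique solution of the inner-loop hitting-time system: if `m ≥ 2` and the reals
`τ 1, ..., τ (m-1)` satisfy
`τ i = (m+1)/2 + (1/m) * ∑_{j=1}^{i-1} τ j + (1/m) * ∑_{j=1}^{m-i} τ j`
for every `i ∈ {1, ..., m-1}`, then `τ i = m*(m+1)/2` for every such `i`. -/
theorem hitting_time_system_unique_solution
    (m : ℕ) (hm : 2 ≤ m) (τ : ℕ → ℝ)
    (hsys : ∀ i : ℕ, 1 ≤ i → i ≤ m - 1 →
      τ i = ((m : ℝ) + 1) / 2
        + (1 / (m : ℝ)) * ∑ j ∈ Finset.Icc 1 (i - 1), τ j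
        + (1 / (m : ℝ)) * ∑ j ∈ Finset.Icc 1 (m - i), τ j) :
    ∀ i : ℕ, 1 ≤ i → i ≤ m - 1 → τ i = (m : ℝ) * ((m : ℝ) + 1) / 2 := by
  have hm0 : (m : ℝ) ≠ 0 := Nat.cast_ne_zero.2 (by omega)
  have hmpos : (0 : ℝ) < m := by positivity
  have hstep : ∀ k : ℕ, 1 ≤ k →
      (∑ j ∈ Finset.Icc 1 k, τ j) = (∑ j ∈ Finset.Icc 1 (k - 1), τ j) + τ k := by
    intro k hk
    cases k with
    | zero => omega
    | succ n =>
      simpa using Finset.sum_Icc_succ_top (by omega : 1 ≤ n + 1) τ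
  have hsym : ∀ i : ℕ, 1 ≤ i → i ≤ m - 1 → τ i = τ (m - i) := by
    intro i h1 h2
    have h1' : 1 ≤ m - i := by omega
    have h2' : m - i ≤ m - 1 := by omega
    have e1 := hsys i h1 h2
    have e2 := hsys (m - i) h1' h2'
    rw [show m - (m - i) = i from by omega] at e2
    have s1 := hstep i h1
    have s2 := hstep (m - i) h1'
    have key : (1 + 1 / (m : ℝ)) * (τ i - τ (m - i)) = 0 := by
      linear_combination e1 - e2 - (1 / (m : ℝ)) * s1 + (1 / (m : ℝ)) * s2
    have hne : (1 + 1 / (m : ℝ)) ≠ 0 := by positivity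
    have := (mul_eq_zero.mp key).resolve_left hne
    linarith
  have hconst : ∀ i : ℕ, 1 ≤ i → i ≤ m - 1 → τ i = τ 1 := by
    intro i
    induction i with
    | zero => omega
    | succ n ih =>
      intro h1 h2
      rcases Nat.eq_or_lt_of_le h1 with h | h
      · rw [← h]
      · have hn1 : 1 ≤ n := by omega
        have hn2 : n ≤ m - 1 := by omega
        have e1 := hsys n hn1 hn2
        have e2 := hsys (n + 1) h1 h2
        rw [show n + 1 - 1 = n from rfl, show m - (n + 1) = m - n - 1 from by omega] at e2
        have s1 := hstep n hn1
        have s2 := hstep (m - n) (by omega)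
        rw [show m - n - 1 = m - n - 1 from rfl] at s2
        have hs := hsym n hn1 hn2
        have : τ (n + 1) = τ n := by
          linear_combination e2 - e1 + (1 / (m : ℝ)) * s1 - (1 / (m : ℝ)) * s2
            + (1 / (m : ℝ)) * hs
        rw [this, ih hn1 hn2]
  intro i h1 h2
  rw [hconst i h1 h2]
  have e1 := hsys 1 le_rfl (by omega)
  have hsum : (∑ j ∈ Finset.Icc 1 (m - 1), τ j) = ((m : ℝ) - 1) * τ 1 := by
    have hc : (∑ j ∈ Finset.Icc 1 (m - 1), τ j) = ∑ _j ∈ Finset.Icc 1 (m - 1), τ 1 :=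
      Finset.sum_congr rfl (fun j hj => by
        rw [Finset.mem_Icc] at hj
        exact hconst j hj.1 hj.2)
    rw [hc, Finset.sum_const, Nat.card_Icc]
    rw [show m - 1 + 1 - 1 = m - 1 from by omega]
    rw [nsmul_eq_mul, Nat.cast_sub (by omega)]
    norm_num
  rw [show (1:ℕ) - 1 = 0 from rfl] at e1
  simp only [Finset.Icc_self, Finset.Icc_eq_empty_of_lt (by norm_num : (1:ℕ) > 0),
    Finset.sum_empty] at e1
  rw [hsum] at e1
  field_simp at e1 ⊢
  ring_nf at e1 ⊢
  nlinarith [e1]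
end
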